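/- arXiv:1910.12894 — 9 statements merged into one kernel-verified Lean document; each statement's English description precedes it below -/
import Mathlib

section
/- Let λ, μ > 0, let x > 0, and set ρ = λ/μ, E = e^{-(λ+μ)x}, I₀ = μ·x/(λ+μ) − μ·(1−E)/(λ+μ)², I₁ = λ·x/(λ+μ) + μ·(1−E)/(λ+μ)². Then the system of equations in the real unknowns Π₀₀, Π₁₀, Π₀₁, Π₁₁: (i) λ·Π₀₀ = μ·Π₁₀; (ii) Π₀₁·I₁ = Π₁₁·I₀; (iii) λ·Π₁₀ = (Π₀₁ + Π₁₁)/x; (iv) Π₀₀ + Π₁₀ + Π₀₁ + Π₁₁ = 1, has the unique solution Π₀₀ = 1/(1 + ρ·(1 + λ·x)), Π₁₀ = ρ·Π₀₀, Π₁₁ = λ·ρ·Π₀₀·I₁, Π₀₁ = λ·ρ·Π₀₀·I₀, and all four values are strictly positive. -/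
theorem dsrt_single_server_balance_unique_solution
    (lam mu x : ℝ) (hlam : 0 < lam) (hmu : 0 < mu) (hx : 0 < x)
    (ρ E I₀ I₁ : ℝ)
    (hρ : ρ = lam / mu)
    (hE : E = Real.exp (-(lam + mu) * x))
    (hI₀ : I₀ = mu * x / (lam + mu) - mu * (1 - E) / (lam + mu) ^ 2)
    (hI₁ : I₁ = lam * x / (lam + mu) + mu * (1 - E) / (lam + mu) ^ 2) :
    (∀ P₀₀ P₁₀ P₀₁ P₁₁ : ℝ,
      (lam * P₀₀ = mu * P₁₀ ∧
       P₀₁ * I₁ = P₁₁ * I₀ ∧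
       lam * P₁₀ = (P₀₁ + P₁₁) / x ∧
       P₀₀ + P₁₀ + P₀₁ + P₁₁ = 1) ↔
      (P₀₀ = 1 / (1 + ρ * (1 + lam * x)) ∧
       P₁₀ = ρ * P₀₀ ∧
       P₁₁ = lam * ρ * P₀₀ * I₁ ∧
       P₀₁ = lam * ρ * P₀₀ * I₀)) ∧
    0 < 1 / (1 + ρ * (1 + lam * x)) ∧
    0 < ρ * (1 / (1 + ρ * (1 + lam * x))) ∧
    0 < lam * ρ * (1 / (1 + ρ * (1 + lam * x))) * I₁ ∧
    0 < lam * ρ * (1 / (1 + ρ * (1 + lam * x))) * I₀ := by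
  have hs : 0 < lam + mu := by linarith
  have hs' : (lam + mu) ≠ 0 := ne_of_gt hs
  have hx' : x ≠ 0 := ne_of_gt hx
  have hmu' : mu ≠ 0 := ne_of_gt hmu
  have hρpos : 0 < ρ := by rw [hρ]; positivity
  have hE1 : E < 1 := by
    rw [hE]
    have : -(lam + mu) * x < 0 := by nlinarith
    calc Real.exp (-(lam + mu) * x) < Real.exp 0 := Real.exp_lt_exp.2 this
      _ = 1 := Real.exp_zero
  have hElt : 1 - (lam + mu) * x < E := by
    rw [hE]
    have hne : -(lam + mu) * x ≠ 0 := by nlinarith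
    have := Real.add_one_lt_exp hne
    linarith
  have hI01 : I₀ + I₁ = x := by
    rw [hI₀, hI₁]; field_simp; ring
  have hI₀pos : 0 < I₀ := by
    rw [hI₀]
    rw [div_sub_div _ _ hs' (by positivity : (lam + mu)^2 ≠ 0)]
    apply div_pos _ (by positivity)
    have h' : (lam + mu) * x - (1 - E) > 0 := by linarith
    nlinarith [mul_pos (mul_pos hmu hs) h']
  have hI₁pos : 0 < I₁ := by
    rw [hI₁]
    have : 0 < 1 - E := by linarith
    positivity
  have hDpos : 0 < 1 + ρ * (1 + lam * x) := by positivity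
  have hD' : (1 + ρ * (1 + lam * x)) ≠ 0 := ne_of_gt hDpos
  refine ⟨?_, by positivity, by positivity, by positivity, by positivity⟩
  intro P₀₀ P₁₀ P₀₁ P₁₁
  constructor
  · rintro ⟨h1, h2, h3, h4⟩
    have hP10 : P₁₀ = ρ * P₀₀ := by
      rw [hρ]; field_simp; linarith
    have hS : P₀₁ + P₁₁ = lam * ρ * P₀₀ * x := by
      have h3' : lam * P₁₀ * x = P₀₁ + P₁₁ := by
        rw [h3]; field_simp
      rw [← h3', hP10]; ring
    have hP01 : P₀₁ = lam * ρ * P₀₀ * I₀ := by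
      have key : P₀₁ * x = (lam * ρ * P₀₀ * I₀) * x := by
        linear_combination (-P₀₁) * hI01 + h2 + I₀ * hS
      exact mul_right_cancel₀ hx' key
    have hP11 : P₁₁ = lam * ρ * P₀₀ * I₁ := by
      have key : P₁₁ * x = (lam * ρ * P₀₀ * I₁) * x := by
        linear_combination (-P₁₁) * hI01 - h2 + I₁ * hS
      exact mul_right_cancel₀ hx' key
    have hP00 : P₀₀ = 1 / (1 + ρ * (1 + lam * x)) := by
      rw [eq_div_iff hD']
      have h4' := h4
      rw [hP10, hP01, hP11] at h4'
      linear_combination h4' - (lam * ρ * P₀₀) * hI01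
    exact ⟨hP00, hP10, hP11, hP01⟩
  · rintro ⟨hP00, hP10, hP11, hP01⟩
    refine ⟨?_, ?_, ?_, ?_⟩
    · rw [hP10, hρ]; field_simp
    · rw [hP11, hP01]; ring
    · rw [hP10, hP11, hP01, eq_div_iff hx']
      linear_combination (-(lam * ρ * P₀₀)) * hI01
    · have e : P₀₀ * (1 + ρ * (1 + lam * x)) = 1 := by
        rw [hP00]; field_simp
      rw [hP10, hP11, hP01]
      linear_combination e + (lam * ρ * P₀₀) * hI01
end

section
/- Let λ, μ > 0, let x > 0, and set ρ = λ/μ, E = e^{-(λ+μ)x}, I₁ = λ·x/(λ+μ) + μ·(1−E)/(λ+μ)², p₁(x) = (λ + μ·E)/(λ+μ). If the reals Π₀₀, Π₁₀, Π₀₁, Π₁₁ satisfy (i) λ·Π₀₀ = μ·Π₁₀; (ii) Π₀₁·I₁ = Π₁₁·(μ·x/(λ+μ) − μ·(1−E)/(λ+μ)²); (iii) λ·Π₁₀ = (Π₀₁ + Π₁₁)/x; (iv) Π₀₀ + Π₁₀ + Π₀₁ + Π₁₁ = 1, then Π₁₁ + (Π₀₁ + Π₁₁)·p₁(x)/(λ·x)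 = ρ/(1+ρ) − ρ·(1 − e^{-(λ+μ)x})/((1+ρ)²·(1 + ρ·(1 + λ·x))). -/
theorem dsrt_single_server_blocking_probability
    (lam mu x : ℝ) (hlam : 0 < lam) (hmu : 0 < mu) (hx : 0 < x)
    (ρ E I₁ p₁x : ℝ)
    (hρ : ρ = lam / mu)
    (hE : E = Real.exp (-(lam + mu) * x))
    (hI₁ : I₁ = lam * x / (lam + mu) + mu * (1 - E) / (lam + mu) ^ 2)
    (hp₁x : p₁x = (lam + mu * E) / (lam + mu))
    (P₀₀ P₁₀ P₀₁ P₁₁ : ℝ)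
    (h1 : lam * P₀₀ = mu * P₁₀)
    (h2 : P₀₁ * I₁ = P₁₁ * (mu * x / (lam + mu) - mu * (1 - E) / (lam + mu) ^ 2))
    (h3 : lam * P₁₀ = (P₀₁ + P₁₁) / x)
    (h4 : P₀₀ + P₁₀ + P₀₁ + P₁₁ = 1) :
    P₁₁ + (P₀₁ + P₁₁) * p₁x / (lam * x) =
      ρ / (1 + ρ) -
        ρ * (1 - Real.exp (-(lam + mu) * x)) /
          ((1 + ρ) ^ 2 * (1 + ρ * (1 + lam * x))) := by
  have hL : (0:ℝ) < lam + mu := by linarith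
  have hLne : lam + mu ≠ 0 := ne_of_gt hL
  have hxne : x ≠ 0 := ne_of_gt hx
  have hlamne : lam ≠ 0 := ne_of_gt hlam
  have hmune : mu ≠ 0 := ne_of_gt hmu
  have hDen : mu + lam + lam ^ 2 * x ≠ 0 := by positivity
  -- P₁₁ * x = (P₀₁ + P₁₁) * I₁
  have key1 : P₁₁ * x = (P₀₁ + P₁₁) * I₁ := by
    have hb : mu * x / (lam + mu) - mu * (1 - E) / (lam + mu) ^ 2 = x - I₁ := by
      rw [hI₁]; field_simp; ring
    rw [hb] at h2
    ring_nf
    ring_nf at h2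
    linarith
  -- P₁₀ from h3
  have hP10 : P₁₀ = (P₀₁ + P₁₁) / (lam * x) := by
    field_simp
    field_simp at h3
    linarith
  have hP00 : P₀₀ = mu * (P₀₁ + P₁₁) / (lam ^ 2 * x) := by
    rw [hP10] at h1
    field_simp at h1 ⊢
    linarith
  have hS : P₀₁ + P₁₁ = lam ^ 2 * x / (mu + lam + lam ^ 2 * x) := by
    rw [hP10, hP00] at h4
    field_simp at h4 ⊢
    apply mul_right_cancel₀ (mul_ne_zero hlamne hxne)
    linear_combination (lam * x) * h4
  have hP11 : P₁₁ = (lam ^ 2 * x / (mu + lam + lam ^ 2 * x)) * I₁ / x := by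
    rw [← hS]
    field_simp
    linarith [key1]
  have hEeq : Real.exp (-(lam + mu) * x) = E := hE.symm
  rw [hS, hP11, hEeq, hI₁, hp₁x, hρ]
  have h1ρ : (1 : ℝ) + lam / mu ≠ 0 := by positivity
  have h2ρ : (1 : ℝ) + lam / mu * (1 + lam * x) ≠ 0 := by positivity
  field_simp
  ring
end

section
/- Let λ, μ > 0, set ρ = λ/μ, and define f : ℝ → ℝ by f(x) = ρ/(1+ρ) − ρ·(1 − exp(−(λ+μ)·x))/((1+ρ)²·(1 + ρ·(1 + λ·x))). Then for every x > 0, 0 < f(x) < ρ/(1+ρ). -/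
theorem dsrt_blocking_strict_improvement
    (lam mu : ℝ) (hlam : 0 < lam) (hmu : 0 < mu)
    (ρ : ℝ) (hρ : ρ = lam / mu)
    (f : ℝ → ℝ)
    (hf : ∀ x : ℝ, f x =
      ρ / (1 + ρ) -
        ρ * (1 - Real.exp (-(lam + mu) * x)) /
          ((1 + ρ) ^ 2 * (1 + ρ * (1 + lam * x)))) :
    ∀ x : ℝ, 0 < x → 0 < f x ∧ f x < ρ / (1 + ρ) := by
  intro x hx
  have hρpos : 0 < ρ := by rw [hρ]; positivity
  set E := Real.exp (-(lam + mu) * x) with hE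
  have hEpos : 0 < E := Real.exp_pos _
  have hElt : E < 1 := by
    rw [hE, Real.exp_lt_one_iff]
    nlinarith
  have hD : 0 < (1 + ρ) ^ 2 * (1 + ρ * (1 + lam * x)) := by positivity
  have h1ρ : 0 < 1 + ρ := by linarith
  have hT : 0 < ρ * (1 - E) / ((1 + ρ) ^ 2 * (1 + ρ * (1 + lam * x))) := by
    apply div_pos _ hD
    nlinarith
  have hTlt : ρ * (1 - E) / ((1 + ρ) ^ 2 * (1 + ρ * (1 + lam * x))) < ρ / (1 + ρ) := by
    rw [div_lt_div_iff₀ hD h1ρ]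
    nlinarith [mul_pos hρpos (mul_pos hlam hx), sq_nonneg ρ,
      mul_pos hEpos h1ρ, mul_pos (mul_pos hρpos hρpos) (mul_pos hlam hx)]
  rw [hf x]
  constructor <;> linarith
end

section
/- Let λ, μ > 0, set ρ = λ/μ, and define f : ℝ → ℝ by f(x) = ρ/(1+ρ) − ρ·(1 − exp(−(λ+μ)·x))/((1+ρ)²·(1 + ρ·(1 + λ·x))). Then there exists x* > 0 such that f(x*) ≤ f(x) for all x > 0. -/
theorem dsrt_optimal_spacing_exists
    (lam mu : ℝ) (hlam : 0 < lam) (hmu : 0 < mu)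
    (ρ : ℝ) (hρ : ρ = lam / mu)
    (f : ℝ → ℝ)
    (hf : ∀ x : ℝ, f x =
      ρ / (1 + ρ) -
        ρ * (1 - Real.exp (-(lam + mu) * x)) /
          ((1 + ρ) ^ 2 * (1 + ρ * (1 + lam * x)))) :
    ∃ xstar : ℝ, 0 < xstar ∧ ∀ x : ℝ, 0 < x → f xstar ≤ f x := by
  have hρ0 : 0 < ρ := hρ ▸ div_pos hlam hmu
  set h : ℝ → ℝ := fun x =>
    ρ * (1 - Real.exp (-(lam + mu) * x)) /
      ((1 + ρ) ^ 2 * (1 + ρ * (1 + lam * x))) with hh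
  have hD : ∀ x : ℝ, 0 ≤ x → 0 < (1 + ρ) ^ 2 * (1 + ρ * (1 + lam * x)) := by
    intro x hx
    have h1 : 0 < 1 + ρ * (1 + lam * x) := by positivity
    positivity
  have h0 : h 0 = 0 := by simp [hh]
  have h1pos : 0 < h 1 := by
    have hexp : Real.exp (-(lam + mu) * 1) < 1 := by
      rw [Real.exp_lt_one_iff]; nlinarith
    have hnum : 0 < ρ * (1 - Real.exp (-(lam + mu) * 1)) := by nlinarith
    exact div_pos hnum (hD 1 (by norm_num))
  set X : ℝ := max 1 (1 / (lam * h 1)) with hX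
  have hX1 : (1:ℝ) ≤ X := le_max_left _ _
  have hbound : ∀ x : ℝ, X ≤ x → h x ≤ h 1 := by
    intro x hx
    have hx0 : (0:ℝ) ≤ x := le_trans (by linarith) hx
    have hDx := hD x hx0
    have hlh : 0 < lam * h 1 := by positivity
    have hxge : 1 / (lam * h 1) ≤ x := le_trans (le_max_right _ _) hx
    have hx' : 1 / (lam * h 1) * (lam * h 1) ≤ x * (lam * h 1) :=
      mul_le_mul_of_nonneg_right hxge (le_of_lt hlh)
    rw [one_div_mul_cancel (ne_of_gt hlh)] at hx'
    have hnum : ρ * (1 - Real.exp (-(lam + mu) * x)) ≤ ρ := by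
      have := Real.exp_nonneg (-(lam + mu) * x)
      nlinarith
    have hstep1 : h x ≤ ρ / ((1 + ρ) ^ 2 * (1 + ρ * (1 + lam * x))) := by
      simp only [hh]
      gcongr
    have hstep2 : ρ / ((1 + ρ) ^ 2 * (1 + ρ * (1 + lam * x))) ≤ h 1 := by
      rw [div_le_iff₀ hDx]
      have key : ρ ≤ h 1 * (ρ * (lam * x)) := by
        nlinarith [mul_le_mul_of_nonneg_left hx' hρ0.le]
      have hDge : ρ * (lam * x) ≤ (1 + ρ) ^ 2 * (1 + ρ * (1 + lam * x)) := by
        nlinarith [mul_nonneg hρ0.le (mul_nonneg hlam.le hx0), sq_nonneg ρ,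
          mul_nonneg (mul_nonneg hρ0.le hρ0.le) (mul_nonneg hlam.le hx0)]
      calc ρ ≤ h 1 * (ρ * (lam * x)) := key
        _ ≤ h 1 * ((1 + ρ) ^ 2 * (1 + ρ * (1 + lam * x))) :=
          mul_le_mul_of_nonneg_left hDge h1pos.le
    linarith
  have hcont : ContinuousOn h (Set.Icc 0 X) := by
    apply ContinuousOn.div
    · fun_prop
    · fun_prop
    · intro x hx; exact ne_of_gt (hD x hx.1)
  obtain ⟨c, hc, hmax⟩ := (isCompact_Icc : IsCompact (Set.Icc 0 X)).exists_isMaxOn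
    ⟨0, Set.mem_Icc.mpr ⟨le_refl 0, by linarith⟩⟩ hcont
  have h1mem : (1:ℝ) ∈ Set.Icc (0:ℝ) X := ⟨by norm_num, hX1⟩
  have hc1 : h 1 ≤ h c := hmax h1mem
  have hcpos : 0 < c := by
    rcases lt_or_eq_of_le hc.1 with hlt | heq
    · exact hlt
    · exfalso; rw [← heq] at hc1; rw [h0] at hc1; linarith
  refine ⟨c, hcpos, fun x hx => ?_⟩
  rw [hf, hf]
  have : h x ≤ h c := by
    by_cases hxX : x ≤ X
    · exact hmax ⟨hx.le, hxX⟩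
    · exact le_trans (hbound x (le_of_not_ge hxX)) hc1
  simp only [hh] at this
  linarith
end

section
/- Let λ, μ > 0, set ρ = λ/μ, and define f : ℝ → ℝ by f(x) = ρ/(1+ρ) − ρ·(1 − exp(−(λ+μ)·x))/((1+ρ)²·(1 + ρ·(1 + λ·x))). If x* > 0 satisfies f(x*) ≤ f(x) for all x > 0, then 1/(λ+μ) ≤ x* ≤ √2/λ. -/
lemma dsrt_aux_lower (t s : ℝ) (ht : 0 < t) (hs : 1 < s)
    (hkey : Real.exp t = 1 + t + s) : 1 < t := by
  by_contra h
  push_neg at h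
  have he1 : 1 - t + 1 ≤ Real.exp (1 - t) := Real.add_one_le_exp (1 - t)
  have hprod : Real.exp t * Real.exp (1 - t) = Real.exp 1 := by
    rw [← Real.exp_add]; ring_nf
  have he : Real.exp 1 < 2.7182818286 := Real.exp_one_lt_d9
  have hp1 : Real.exp t * (2 - t) ≤ Real.exp t * Real.exp (1 - t) := by
    have : (2 : ℝ) - t ≤ Real.exp (1 - t) := by linarith
    exact mul_le_mul_of_nonneg_left this (Real.exp_pos t).le
  have hp2 : Real.exp t * (2 - t) ≤ Real.exp 1 := by rw [← hprod]; exact hp1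
  have hp3 : (2 + t) * (2 - t) < Real.exp t * (2 - t) := by nlinarith
  nlinarith

theorem dsrt_optimal_spacing_bounds
    (lam mu : ℝ) (hlam : 0 < lam) (hmu : 0 < mu)
    (ρ : ℝ) (hρ : ρ = lam / mu)
    (f : ℝ → ℝ)
    (hf : ∀ x : ℝ, f x =
      ρ / (1 + ρ) -
        ρ * (1 - Real.exp (-(lam + mu) * x)) /
          ((1 + ρ) ^ 2 * (1 + ρ * (1 + lam * x))))
    (xstar : ℝ) (hxstar : 0 < xstar)
    (hmin : ∀ x : ℝ, 0 < x → f xstar ≤ f x) :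
    1 / (lam + mu) ≤ xstar ∧ xstar ≤ Real.sqrt 2 / lam := by
  have hρpos : 0 < ρ := by rw [hρ]; positivity
  obtain ⟨a, ha_def⟩ : ∃ a : ℝ, a = lam + mu := ⟨_, rfl⟩
  rw [← ha_def] at hf
  have ha : 0 < a := by rw [ha_def]; positivity
  have hdpos : 0 < (1 + ρ) ^ 2 * (1 + ρ * (1 + lam * xstar)) := by positivity
  have hloc : IsLocalMin f xstar := by
    filter_upwards [(isOpen_Ioi (a := (0:ℝ))).mem_nhds hxstar] with y hy
    exact hmin y hy
  have hfun : f = fun x : ℝ => ρ / (1 + ρ) -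
      ρ * (1 - Real.exp (-a * x)) / ((1 + ρ) ^ 2 * (1 + ρ * (1 + lam * x))) := by
    funext x; exact hf x
  have hn : HasDerivAt (fun x : ℝ => ρ * (1 - Real.exp (-a * x)))
      (ρ * (a * Real.exp (-a * xstar))) xstar := by
    have h1 : HasDerivAt (fun x : ℝ => (-a) * x) (-a) xstar := by
      simpa using (hasDerivAt_id xstar).const_mul (-a)
    have h2 := h1.exp
    have h3 : HasDerivAt (fun x : ℝ => 1 - Real.exp (-a * x))
        (a * Real.exp (-a * xstar)) xstar := by
      have := (hasDerivAt_const xstar (1:ℝ)).sub h2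
      refine this.congr_deriv ?_
      ring
    have := h3.const_mul ρ
    convert this using 1
  have hd : HasDerivAt (fun x : ℝ => (1 + ρ) ^ 2 * (1 + ρ * (1 + lam * x)))
      ((1 + ρ) ^ 2 * (ρ * lam)) xstar := by
    have h1 : HasDerivAt (fun x : ℝ => 1 + ρ * (1 + lam * x)) (ρ * lam) xstar := by
      have h0 := (((hasDerivAt_id xstar).const_mul lam).const_add (1:ℝ)).const_mul ρ
      have h2 := h0.const_add (1:ℝ)
      refine h2.congr_deriv ?_
      ring
    simpa using h1.const_mul ((1 + ρ) ^ 2)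
  have hquot := hn.div hd hdpos.ne'
  have hF : HasDerivAt f
      (0 - (ρ * (a * Real.exp (-a * xstar)) * ((1 + ρ) ^ 2 * (1 + ρ * (1 + lam * xstar))) -
        ρ * (1 - Real.exp (-a * xstar)) * ((1 + ρ) ^ 2 * (ρ * lam))) /
        ((1 + ρ) ^ 2 * (1 + ρ * (1 + lam * xstar))) ^ 2) xstar := by
    rw [hfun]
    exact (hasDerivAt_const xstar (ρ / (1 + ρ))).sub hquot
  have hderiv0 := hloc.deriv_eq_zero
  rw [hF.deriv] at hderiv0
  have hN : ρ * (a * Real.exp (-a * xstar)) * ((1 + ρ) ^ 2 * (1 + ρ * (1 + lam * xstar))) -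
      ρ * (1 - Real.exp (-a * xstar)) * ((1 + ρ) ^ 2 * (ρ * lam)) = 0 := by
    have h0 : (ρ * (a * Real.exp (-a * xstar)) * ((1 + ρ) ^ 2 * (1 + ρ * (1 + lam * xstar))) -
        ρ * (1 - Real.exp (-a * xstar)) * ((1 + ρ) ^ 2 * (ρ * lam))) /
        ((1 + ρ) ^ 2 * (1 + ρ * (1 + lam * xstar))) ^ 2 = 0 := by linarith
    rcases div_eq_zero_iff.mp h0 with h | h
    · exact h
    · exact absurd h (by positivity)
  have hcancel : a * Real.exp (-a * xstar) * (1 + ρ * (1 + lam * xstar)) =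
      (1 - Real.exp (-a * xstar)) * (ρ * lam) := by
    have h1 : (0:ℝ) < ρ * (1 + ρ) ^ 2 := by positivity
    have h2 : ρ * (1 + ρ) ^ 2 * (a * Real.exp (-a * xstar) * (1 + ρ * (1 + lam * xstar))) =
        ρ * (1 + ρ) ^ 2 * ((1 - Real.exp (-a * xstar)) * (ρ * lam)) := by
      linear_combination hN
    exact mul_left_cancel₀ h1.ne' h2
  have hE : Real.exp (-a * xstar) * Real.exp (a * xstar) = 1 := by
    rw [← Real.exp_add]
    norm_num
  have hkey : (ρ * lam) * Real.exp (a * xstar) =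
      ρ * lam + a * (1 + ρ * (1 + lam * xstar)) := by
    linear_combination (-(Real.exp (a * xstar))) * hcancel +
      (a * (1 + ρ * (1 + lam * xstar)) + ρ * lam) * hE
  have hrl : (0:ℝ) < ρ * lam := by positivity
  have hkey2 : Real.exp (a * xstar) = 1 + a * xstar + a ^ 2 / lam ^ 2 := by
    have h2 : ρ * lam * (1 + a * xstar + a ^ 2 / lam ^ 2) =
        ρ * lam + a * (1 + ρ * (1 + lam * xstar)) := by
      rw [hρ, ha_def]
      field_simp
      ring
    exact mul_left_cancel₀ hrl.ne' (hkey.trans h2.symm)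
  have hs : 1 < a ^ 2 / lam ^ 2 := by
    rw [lt_div_iff₀ (by positivity)]
    rw [ha_def]
    nlinarith
  have ht : 0 < a * xstar := by positivity
  have hlow : 1 < a * xstar := dsrt_aux_lower (a * xstar) (a ^ 2 / lam ^ 2) ht hs hkey2
  constructor
  · rw [← ha_def, div_le_iff₀ ha]
    linarith
  · have hquad : 1 + a * xstar + (a * xstar) ^ 2 / 2 ≤ Real.exp (a * xstar) :=
      Real.quadratic_le_exp_of_nonneg ht.le
    have ht2 : (a * xstar) ^ 2 / 2 ≤ a ^ 2 / lam ^ 2 := by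
      rw [hkey2] at hquad; linarith
    have h5 : (a * xstar) ^ 2 * lam ^ 2 ≤ 2 * a ^ 2 := by
      have := (div_le_div_iff₀ (by norm_num : (0:ℝ) < 2) (by positivity : (0:ℝ) < lam ^ 2)).mp ht2
      linarith
    have hlx : (lam * xstar) ^ 2 ≤ 2 := by
      nlinarith [sq_nonneg a, mul_pos ha ha]
    have hle : lam * xstar ≤ Real.sqrt 2 := by
      have := Real.sqrt_le_sqrt hlx
      rwa [Real.sqrt_sq (by positivity : (0:ℝ) ≤ lam * xstar)] at this
    rw [le_div_iff₀ hlam]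
    linarith [hle]
end

section
/- Let K ≥ 1 be a natural number and let λ, μ, α > 0 be reals. Define the (K+1)×(K+1) real matrix A(α) indexed by j, j' ∈ {0, …, K} as follows: A(α)_{j,j} = λ + j·μ + α for 0 ≤ j < K; A(α)_{K,K} = λ; A(α)_{j,j+1} = −λ for 0 ≤ j ≤ K−2; A(α)_{j+1,j} = −(j+1)·μ for 0 ≤ j ≤ K−1; all other entries are 0. Then A(α) is invertible. -/
/-- The coefficient matrix `A(α)` of the ESRT flow balance equations for levels
with `d` deferred customers (`1 ≤ d < D`). -/
def esrtMatrixA (K : ℕ) (lam mu al : ℝ) : Matrix (Fin (K + 1)) (Fin (K + 1)) ℝ :=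
  Matrix.of fun j j' =>
    if (j : ℕ) = (j' : ℕ) then
      (if (j : ℕ) < K then lam + (j : ℕ) * mu + al else lam)
    else if (j' : ℕ) = (j : ℕ) + 1 ∧ (j : ℕ) + 1 < K then -lam
    else if (j : ℕ) = (j' : ℕ) + 1 then -((j : ℕ) : ℝ) * mu
    else 0

/-- Row expansion of `esrtMatrixA.mulVec`: each row has at most three nonzero entries. -/
lemma esrt_row_sum (K : ℕ) (lam mu al : ℝ) (v : Fin (K+1) → ℝ) (i : Fin (K+1)) :
    (esrtMatrixA K lam mu al).mulVec v i =
      (if (i:ℕ) < K then lam + (i:ℕ)*mu + al else lam) * v i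
      + (if h : (i:ℕ)+1 < K then -lam * v ⟨(i:ℕ)+1, by omega⟩ else 0)
      + (-((i:ℕ):ℝ) * mu) * v ⟨(i:ℕ)-1, by have := i.isLt; omega⟩ := by
  by_cases h1 : (i:ℕ)+1 < K
  · have key : ∀ j : Fin (K+1), esrtMatrixA K lam mu al i j * v j =
        (if j = i then (if (i:ℕ) < K then lam + (i:ℕ)*mu + al else lam) * v j else 0)
        + (if j = (⟨(i:ℕ)+1, by omega⟩ : Fin (K+1)) then -lam * v j else 0)
        + (if (j:ℕ) + 1 = (i:ℕ) then (-((i:ℕ):ℝ) * mu) * v j else 0) := by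
      intro j
      simp only [esrtMatrixA, Matrix.of_apply, Fin.ext_iff]
      split_ifs <;> first | ring1 | omega
    simp only [Matrix.mulVec, dotProduct, key]
    rw [Finset.sum_add_distrib, Finset.sum_add_distrib, dif_pos h1]
    congr 1
    · congr 1
      · simp [Finset.sum_ite_eq']
      · simp [Finset.sum_ite_eq']
    · have heq : ∀ j : Fin (K+1), ((j:ℕ) + 1 = (i:ℕ)) =
          (j = (⟨(i:ℕ)-1, by have := i.isLt; omega⟩ : Fin (K+1)) ∧ 0 < (i:ℕ)) := by
        intro j; rw [eq_iff_iff, Fin.ext_iff]; simp only [Fin.val_mk]; omega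
      by_cases h0 : 0 < (i:ℕ)
      · simp only [heq, h0, and_true]
        simp [Finset.sum_ite_eq']
      · have hi0 : (i:ℕ) = 0 := by omega
        simp [hi0]
  · have key : ∀ j : Fin (K+1), esrtMatrixA K lam mu al i j * v j =
        (if j = i then (if (i:ℕ) < K then lam + (i:ℕ)*mu + al else lam) * v j else 0)
        + (if (j:ℕ) + 1 = (i:ℕ) then (-((i:ℕ):ℝ) * mu) * v j else 0) := by
      intro j
      simp only [esrtMatrixA, Matrix.of_apply, Fin.ext_iff]
      split_ifs <;> first | ring1 | omega
    simp only [Matrix.mulVec, dotProduct, key]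
    rw [Finset.sum_add_distrib, dif_neg h1, add_zero]
    congr 1
    · simp [Finset.sum_ite_eq']
    · have heq : ∀ j : Fin (K+1), ((j:ℕ) + 1 = (i:ℕ)) =
          (j = (⟨(i:ℕ)-1, by have := i.isLt; omega⟩ : Fin (K+1)) ∧ 0 < (i:ℕ)) := by
        intro j; rw [eq_iff_iff, Fin.ext_iff]; simp only [Fin.val_mk]; omega
      by_cases h0 : 0 < (i:ℕ)
      · simp only [heq, h0, and_true]
        simp [Finset.sum_ite_eq']
      · have hi0 : (i:ℕ) = 0 := by omega
        simp [hi0]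

theorem esrtMatrixA_isUnit
    (K : ℕ) (hK : 1 ≤ K) (lam mu al : ℝ)
    (hlam : 0 < lam) (hmu : 0 < mu) (hal : 0 < al) :
    IsUnit (esrtMatrixA K lam mu al) := by
  rw [Matrix.isUnit_iff_isUnit_det, isUnit_iff_ne_zero]
  intro hdet
  obtain ⟨v, hv0, hMv⟩ := (Matrix.exists_mulVec_eq_zero_iff).mpr hdet
  have hMv' : ∀ i, (esrtMatrixA K lam mu al).mulVec v i = 0 := fun i => by rw [hMv]; rfl
  have hrow := fun i => (esrt_row_sum K lam mu al v i).symm.trans (hMv' i)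
  set S : Finset (Fin (K+1)) := Finset.univ.filter (fun j => (j:ℕ) < K) with hSdef
  have hS : S.Nonempty := ⟨⟨0, by omega⟩, by simp [hSdef]; omega⟩
  obtain ⟨j0, hj0S, hmax⟩ := S.exists_max_image (fun j => |v j|) hS
  have hj0 : (j0:ℕ) < K := by simpa [hSdef] using hj0S
  have hmax' : ∀ j : Fin (K+1), (j:ℕ) < K → |v j| ≤ |v j0| := by
    intro j hj; exact hmax j (by simp [hSdef, hj])
  have hm0 : 0 ≤ |v j0| := abs_nonneg _
  have hcast : (0:ℝ) ≤ ((j0:ℕ):ℝ) := Nat.cast_nonneg _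
  have hz : v j0 = 0 := by
    have h := hrow j0
    rw [if_pos hj0] at h
    have hEq : (lam + (j0:ℕ)*mu + al) * v j0 =
        -((if h' : (j0:ℕ)+1 < K then -lam * v ⟨(j0:ℕ)+1, by omega⟩ else 0)
          + (-((j0:ℕ):ℝ) * mu) * v ⟨(j0:ℕ)-1, by have := j0.isLt; omega⟩) := by
      linarith [h]
    have hb1 : |(if h' : (j0:ℕ)+1 < K then -lam * v ⟨(j0:ℕ)+1, by omega⟩ else 0)|
        ≤ lam * |v j0| := by
      split_ifs with h'
      · rw [abs_mul, abs_neg, abs_of_pos hlam]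
        exact mul_le_mul_of_nonneg_left (hmax' _ (by simp; omega)) hlam.le
      · simpa using mul_nonneg hlam.le hm0
    have hb2 : |(-((j0:ℕ):ℝ) * mu) * v ⟨(j0:ℕ)-1, by have := j0.isLt; omega⟩|
        ≤ ((j0:ℕ):ℝ) * mu * |v j0| := by
      rw [abs_mul, abs_mul, abs_neg, abs_of_nonneg hcast, abs_of_pos hmu]
      exact mul_le_mul_of_nonneg_left (hmax' _ (by simp; omega))
        (mul_nonneg hcast hmu.le)
    have hpos : 0 < lam + ((j0:ℕ):ℝ)*mu + al := by nlinarith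
    have habs : (lam + (j0:ℕ)*mu + al) * |v j0| ≤ (lam + (j0:ℕ)*mu) * |v j0| := by
      calc (lam + (j0:ℕ)*mu + al) * |v j0| = |(lam + (j0:ℕ)*mu + al) * v j0| := by
            rw [abs_mul, abs_of_pos hpos]
          _ ≤ lam * |v j0| + ((j0:ℕ):ℝ) * mu * |v j0| := by
            rw [hEq, abs_neg]
            exact (abs_add_le _ _).trans (add_le_add hb1 hb2)
          _ = (lam + (j0:ℕ)*mu) * |v j0| := by ring
    have h1 : al * |v j0| ≤ 0 := by nlinarith
    have h2 : |v j0| = 0 := le_antisymm (by nlinarith) hm0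
    exact abs_eq_zero.mp h2
  have hzS : ∀ j : Fin (K+1), (j:ℕ) < K → v j = 0 := by
    intro j hj
    have h' := hmax' j hj
    rw [hz, abs_zero] at h'
    exact abs_nonpos_iff.mp h'
  have hzK : v ⟨K, by omega⟩ = 0 := by
    have h := hrow ⟨K, by omega⟩
    rw [if_neg (by simp), dif_neg (by simp)] at h
    have h2 : v ⟨K-1, by omega⟩ = 0 := hzS _ (by simp; omega)
    simp only [h2, mul_zero, add_zero] at h
    have : lam * v ⟨K, by omega⟩ = 0 := by
      simpa using h
    exact (mul_eq_zero.mp this).resolve_left hlam.ne'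
  apply hv0
  funext j
  by_cases hj : (j:ℕ) < K
  · exact hzS j hj
  · have hj' : j = ⟨K, by omega⟩ := by rw [Fin.ext_iff]; have := j.isLt; simp; omega
    rw [hj']; exact hzK
end

section
/- Let K ≥ 1 be a natural number and let λ, μ > 0 be reals. Define the (K+1)×(K+1) real matrix A(0) indexed by j, j' ∈ {0, …, K} as follows: A(0)_{j,j} = λ + j·μ for 0 ≤ j < K; A(0)_{K,K} = λ; A(0)_{j,j+1} = −λ for 0 ≤ j ≤ K−2; A(0)_{j+1,j} = −(j+1)·μ for 0 ≤ j ≤ K−1; all other entries are 0. Then the determinant of A(0) equals λ^{K+1}. In particular, A(0) is invertible. -/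
def esrtMatrixAZero (K : ℕ) (lam mu : ℝ) : Matrix (Fin (K + 1)) (Fin (K + 1)) ℝ :=
  Matrix.of fun j j' =>
    if (j : ℕ) = (j' : ℕ) then
      (if (j : ℕ) < K then lam + (j : ℕ) * mu else lam)
    else if (j' : ℕ) = (j : ℕ) + 1 ∧ (j : ℕ) + 1 < K then -lam
    else if (j : ℕ) = (j' : ℕ) + 1 then -((j : ℕ) : ℝ) * mu
    else 0

noncomputable def esrtL (K : ℕ) (lam mu : ℝ) : Matrix (Fin (K + 1)) (Fin (K + 1)) ℝ :=
  Matrix.of fun j k =>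
    if (j : ℕ) = (k : ℕ) then 1
    else if (j : ℕ) = (k : ℕ) + 1 then -((j : ℕ) : ℝ) * mu / lam
    else 0

def esrtU (K : ℕ) (lam : ℝ) : Matrix (Fin (K + 1)) (Fin (K + 1)) ℝ :=
  Matrix.of fun k j' =>
    if (k : ℕ) = (j' : ℕ) then lam
    else if (j' : ℕ) = (k : ℕ) + 1 ∧ (k : ℕ) + 1 < K then -lam
    else 0

theorem esrt_LU (K : ℕ) (lam mu : ℝ) (hlam : lam ≠ 0) :
    esrtMatrixAZero K lam mu = esrtL K lam mu * esrtU K lam :=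
  by
  ext j j'
  rw [Matrix.mul_apply]
  have hsplit : ∀ k : Fin (K+1), esrtL K lam mu j k * esrtU K lam k j'
      = (if j = k then esrtU K lam k j' else 0)
        + (if (j : ℕ) = (k : ℕ) + 1 then (-((j : ℕ) : ℝ) * mu / lam) * esrtU K lam k j' else 0) := by
    intro k
    simp only [esrtL, Matrix.of_apply]
    rcases eq_or_ne (j : ℕ) (k : ℕ) with h | h
    · have : j = k := Fin.ext h
      simp [h, this]
    · have : j ≠ k := fun hh => h (by rw [hh])
      simp [h, this]
  rw [Finset.sum_congr rfl fun k _ => hsplit k, Finset.sum_add_distrib]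
  rw [Finset.sum_ite_eq Finset.univ j (fun k => esrtU K lam k j')]
  simp only [Finset.mem_univ, if_true]
  by_cases hj : (j : ℕ) = 0
  · have h2 : ∀ k : Fin (K+1), (if (j : ℕ) = (k : ℕ) + 1 then (-((j : ℕ) : ℝ) * mu / lam) * esrtU K lam k j' else 0) = 0 := by
      intro k; rw [if_neg]; omega
    rw [Finset.sum_congr rfl fun k _ => h2 k, Finset.sum_const_zero, add_zero]
    simp only [esrtMatrixAZero, esrtU, Matrix.of_apply, hj]
    split_ifs <;>
      first
        | (exfalso; omega)
        | simp [hj]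
        | rfl
  · have hlt : (j : ℕ) - 1 < K + 1 := by omega
    have h2 : ∀ k : Fin (K+1), (if (j : ℕ) = (k : ℕ) + 1 then (-((j : ℕ) : ℝ) * mu / lam) * esrtU K lam k j' else 0)
        = (if (⟨(j : ℕ) - 1, hlt⟩ : Fin (K+1)) = k then (-((j : ℕ) : ℝ) * mu / lam) * esrtU K lam k j' else 0) := by
      intro k
      refine if_congr ?_ rfl rfl
      rw [Fin.ext_iff]
      show ((j : ℕ) = (k : ℕ) + 1) ↔ ((j : ℕ) - 1 = (k : ℕ))
      omega
    rw [Finset.sum_congr rfl fun k _ => h2 k,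
      Finset.sum_ite_eq Finset.univ (⟨(j : ℕ) - 1, hlt⟩ : Fin (K+1))
        (fun k => (-((j : ℕ) : ℝ) * mu / lam) * esrtU K lam k j')]
    simp only [Finset.mem_univ, if_true]
    have hq : ((⟨(j : ℕ) - 1, hlt⟩ : Fin (K+1)) : ℕ) = (j : ℕ) - 1 := rfl
    simp only [esrtMatrixAZero, esrtU, Matrix.of_apply, hq]
    split_ifs <;>
      first
        | (exfalso; omega)
        | (field_simp; ring)
        | field_simp
        | simp

theorem esrtL_det (K : ℕ) (lam mu : ℝ) : (esrtL K lam mu).det = 1 := by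
  rw [Matrix.det_of_lowerTriangular]
  · simp [esrtL]
  · intro i j hij
    simp only [OrderDual.toDual_lt_toDual] at hij
    have h1 : (i : ℕ) ≠ (j : ℕ) := by omega
    have h2 : (i : ℕ) ≠ (j : ℕ) + 1 := by omega
    simp [esrtL, h1, h2]

theorem esrtU_det (K : ℕ) (lam : ℝ) : (esrtU K lam).det = lam ^ (K + 1) := by
  rw [Matrix.det_of_upperTriangular]
  · simp [esrtU]
  · intro i j hij
    simp only [Function.id_def] at hij
    have h1 : (i : ℕ) ≠ (j : ℕ) := by omega
    have h2 : ¬((j : ℕ) = (i : ℕ) + 1 ∧ (i : ℕ) + 1 < K) := by omega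
    simp [esrtU, h1, h2]

theorem esrtMatrixAZero_det
    (K : ℕ) (hK : 1 ≤ K) (lam mu : ℝ)
    (hlam : 0 < lam) (hmu : 0 < mu) :
    (esrtMatrixAZero K lam mu).det = lam ^ (K + 1) ∧
      IsUnit (esrtMatrixAZero K lam mu) := by
  have hdet : (esrtMatrixAZero K lam mu).det = lam ^ (K + 1) := by
    rw [esrt_LU K lam mu hlam.ne', Matrix.det_mul, esrtL_det, esrtU_det, one_mul]
  refine ⟨hdet, (Matrix.isUnit_iff_isUnit_det _).2 ?_⟩
  rw [hdet]
  exact (pow_ne_zero _ hlam.ne').isUnit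
end

section
/- Let λ, μ, α > 0 be reals, let D ≥ 1 be a natural number, and set a = λ/α and b = (λ+α)/(λ+α+μ). Suppose the reals Π_{k,d} for k ∈ {0,1} and d ∈ {0,1,…,D} satisfy: (λ+α)·Π_{0,d} = μ·Π_{1,d} for all 1 ≤ d ≤ D, and λ·Π_{1,d} = α·(Π_{0,d+1} + Π_{1,d+1}) for all 0 ≤ d < D. Then Π_{1,d} = (a·b)^d · Π_{1,0} for all 0 ≤ d ≤ D. -/
theorem esrt_single_server_geometric_levels
    (lam mu al : ℝ) (hlam : 0 < lam) (hmu : 0 < mu) (hal : 0 < al)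
    (D : ℕ) (hD : 1 ≤ D)
    (a b : ℝ) (ha : a = lam / al) (hb : b = (lam + al) / (lam + al + mu))
    (P₀ P₁ : ℕ → ℝ)
    (hbal : ∀ d : ℕ, 1 ≤ d → d ≤ D → (lam + al) * P₀ d = mu * P₁ d)
    (hcut : ∀ d : ℕ, d < D → lam * P₁ d = al * (P₀ (d + 1) + P₁ (d + 1))) :
    ∀ d : ℕ, d ≤ D → P₁ d = (a * b) ^ d * P₁ 0 := by
  intro d
  induction d with
  | zero => intro _; simp
  | succ n ih =>
    intro hle
    have hnD : n < D := Nat.lt_of_succ_le hle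
    have h1 := hcut n hnD
    have h2 := hbal (n + 1) (Nat.succ_le_succ (Nat.zero_le n)) hle
    have hln : lam + al ≠ 0 := by positivity
    have hlnm : lam + al + mu ≠ 0 := by positivity
    have hP0 : P₀ (n + 1) = mu / (lam + al) * P₁ (n + 1) := by
      field_simp
      linarith [h2]
    rw [hP0] at h1
    have key : P₁ (n + 1) = (a * b) * P₁ n := by
      rw [ha, hb]
      have hal' : al ≠ 0 := ne_of_gt hal
      field_simp at h1 ⊢
      ring_nf at h1 ⊢
      nlinarith [h1]
    rw [key, ih (Nat.le_of_lt hnD), pow_succ]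
    ring
end

section
/- Let λ, μ, α > 0 be reals with λ² ≠ α² + α·μ, let D ≥ 1 be a natural number, and set a = λ/α and b = (λ+α)/(λ+α+μ). Suppose the reals Π_{k,d} for k ∈ {0,1} and d ∈ {0,1,…,D} satisfy: (λ+α)·Π_{0,d} = μ·Π_{1,d} for all 1 ≤ d ≤ D; λ·Π_{0,0} = μ·Π_{1,0}; λ·Π_{1,d} = α·(Π_{0,d+1} + Π_{1,d+1}) for all 0 ≤ d < D; and Σ_{k∈{0,1}} Σ_{d=0}^{D} Π_{k,d} = 1. Then Π_{1,D} + (α/λ)·Σ_{d=1}^{D} Π_{1,d} = (λ/(λ+μ)) · ((a·b)^{D+1} + (b−1)·(a·b)^{D} − b) / (a·b − 1 + a·(λ/(λ+μ))·((a·b)^{D} − 1)). -/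
theorem esrt_single_server_blocking_probability
    (lam mu al : ℝ) (hlam : 0 < lam) (hmu : 0 < mu) (hal : 0 < al)
    (hnd : lam ^ 2 ≠ al ^ 2 + al * mu)
    (D : ℕ) (hD : 1 ≤ D)
    (a b : ℝ) (ha : a = lam / al) (hb : b = (lam + al) / (lam + al + mu))
    (P₀ P₁ : ℕ → ℝ)
    (hbal : ∀ d : ℕ, 1 ≤ d → d ≤ D → (lam + al) * P₀ d = mu * P₁ d)
    (hbal0 : lam * P₀ 0 = mu * P₁ 0)
    (hcut : ∀ d : ℕ, d < D → lam * P₁ d = al * (P₀ (d + 1) + P₁ (d + 1)))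
    (hnorm : ∑ d ∈ Finset.range (D + 1), (P₀ d + P₁ d) = 1) :
    P₁ D + (al / lam) * ∑ d ∈ Finset.Icc 1 D, P₁ d =
      (lam / (lam + mu)) *
        ((a * b) ^ (D + 1) + (b - 1) * (a * b) ^ D - b) /
        (a * b - 1 + a * (lam / (lam + mu)) * ((a * b) ^ D - 1)) := by
  have hal' : al ≠ 0 := hal.ne'
  have hlam' : lam ≠ 0 := hlam.ne'
  have hla : lam + al ≠ 0 := by positivity
  have hlamu : lam + al + mu ≠ 0 := by positivity
  have hlm : lam + mu ≠ 0 := by positivity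
  have haa : a * al = lam := by rw [ha]; field_simp
  have hbb : b * (lam + al + mu) = lam + al := by rw [hb]; field_simp
  have hbne : b ≠ 0 := by
    rw [hb]; positivity
  have hane : a ≠ 0 := by rw [ha]; positivity
  have hr1 : a * b ≠ 1 := by
    intro h
    apply hnd
    rw [ha, hb] at h
    field_simp at h
    linear_combination h
  -- closed form for P₁
  have hstep : ∀ d, d < D → P₁ (d + 1) = (a * b) * P₁ d := by
    intro d hd
    have h1 := hcut d hd
    have h2 := hbal (d + 1) (by omega) (by omega)
    rw [ha, hb]
    field_simp
    linear_combination (-(lam + al)) * h1 - al * h2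
  have hpow : ∀ d, d ≤ D → P₁ d = (a * b) ^ d * P₁ 0 := by
    intro d
    induction d with
    | zero => intro _; simp
    | succ n ih =>
      intro h
      rw [hstep n (by omega), ih (by omega), pow_succ]; ring
  -- geometric sum
  have hT : (∑ i ∈ Finset.range D, (a * b) ^ i) * (a * b - 1)
      = (a * b) ^ D - 1 := geom_sum_mul (a * b) D
  set T := ∑ i ∈ Finset.range D, (a * b) ^ i with hTdef
  set Q := P₁ 0 with hQdef
  -- rewrite the Icc sum
  have hsum1 : ∑ d ∈ Finset.Icc 1 D, P₁ d = (a * b) * T * Q := by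
    rw [← Finset.Ico_add_one_right_eq_Icc, Finset.sum_Ico_eq_sum_range]
    simp only [Nat.add_sub_cancel]
    rw [hTdef, Finset.mul_sum, Finset.sum_mul]
    apply Finset.sum_congr rfl
    intro i hi
    simp only [Finset.mem_range] at hi
    rw [hpow (1 + i) (by omega), pow_add, pow_one]
  -- rewrite the normalization
  have hterm : ∀ i ∈ Finset.range D,
      P₀ (i + 1) + P₁ (i + 1)
        = ((lam + al + mu) / (lam + al)) * ((a * b) ^ (i + 1) * Q) := by
    intro i hi
    simp only [Finset.mem_range] at hi
    have h2 := hbal (i + 1) (by omega) (by omega)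
    have h0 : P₀ (i + 1) = mu * P₁ (i + 1) / (lam + al) := by
      field_simp
      linear_combination h2
    rw [h0, hpow (i + 1) (by omega)]
    field_simp
    ring
  rw [Finset.sum_range_succ', Finset.sum_congr rfl hterm] at hnorm
  have hs : ∑ x ∈ Finset.range D, (lam + al + mu) / (lam + al) * ((a * b) ^ (x + 1) * Q)
      = T * ((lam + al + mu) / (lam + al) * (a * b * Q)) := by
    rw [hTdef, Finset.sum_mul]
    exact Finset.sum_congr rfl fun i _ => by rw [pow_succ]; ring
  rw [hs] at hnorm
  have H4 : (lam + al + mu) * (a * b * T * Q) + (lam + al) * (P₀ 0 + Q)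
      = lam + al := by
    field_simp at hnorm
    linear_combination hnorm
  -- key identity: (cleared denominator) * Q = lam * (a*b - 1)
  have hdQ2 : ((lam + mu) * (a * b - 1) + a * lam * ((a * b) ^ D - 1)) * Q
      = lam * (a * b - 1) := by
    have key : ((lam + al + mu) * b) *
        (((lam + mu) * (a * b - 1) + a * lam * ((a * b) ^ D - 1)) * Q)
        = ((lam + al + mu) * b) * (lam * (a * b - 1)) := by
      linear_combination (a * b - 1) * lam * H4 - (a * b - 1) * (lam + al) * hbal0
        + ((lam + mu) * Q - lam) * (a * b - 1) * hbb
        - (lam + al + mu) * b * a * lam * Q * hT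
    exact mul_left_cancel₀ (by positivity) key
  have hbrQ : ((lam + mu) * (a * b - 1) + a * lam * ((a * b) ^ D - 1)) ≠ 0 := by
    intro h
    rw [h, zero_mul] at hdQ2
    exact (mul_ne_zero hlam' (sub_ne_zero.mpr hr1)) hdQ2.symm
  have hdenne : a * b - 1 + a * (lam / (lam + mu)) * ((a * b) ^ D - 1) ≠ 0 := by
    intro h
    apply hbrQ
    have := congrArg (· * (lam + mu)) h
    simp only [zero_mul] at this
    field_simp at this
    linear_combination this
  rw [hpow D le_rfl, hsum1, eq_div_iff hdenne]
  field_simp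
  linear_combination (lam * (a * b) ^ D + al * (a * b) * T) * hdQ2
    + lam * al * (a * b) * hT
    + lam * b * ((a * b) ^ D - 1) * haa
end
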